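/- arXiv:cs/0508049 — 2 statements merged into one kernel-verified Lean document; each statement's English description precedes it below -/
import Mathlib

section
/- Let p = (p₁,…,p_n) be a vector of nonnegative integers such that p lies in the fundamental cone K(H) and Hpᵀ = 0 over F₂ (that is, Σ_i h_{ji} p_i is even for every row index j). Then p is an unscaled pseudo-codeword of H; that is, there exist an integer M ≥ 1, permutations σ_{ji} of {1,…,M} for each pair (j,i) with h_{ji} = 1, and a vector c̃ ∈ F₂^{nM} with H̃c̃ᵀ = 0 over F₂ for the associated M-lift H̃, such that p_i = #{k : c̃_{(i,k)} = 1} for each i. -/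
open Finset

/-- The fundamental cone of a 0-1 matrix `H` (entries in `ZMod 2`, read as reals via `.val`). -/
def InFundCone {R I : Type*} [Fintype I] [DecidableEq I] (H : Matrix R I (ZMod 2)) (ν : I → ℝ) : Prop :=
  (∀ i, 0 ≤ ν i) ∧
  ∀ (j : R) (i : I), ((H j i).val : ℝ) * ν i ≤ ∑ i' ∈ Finset.univ.erase i, ((H j i').val : ℝ) * ν i'

/-- The `M`-lift of `H` determined by permutations `σ j i`. -/
def matLift {R I : Type*} (H : Matrix R I (ZMod 2)) {M : ℕ} (σ : R → I → Equiv.Perm (Fin M)) :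
    Matrix (R × Fin M) (I × Fin M) (ZMod 2) :=
  fun jl ik => if H jl.1 ik.1 = 1 ∧ σ jl.1 ik.1 jl.2 = ik.2 then 1 else 0

/-- `p` is an unscaled pseudo-codeword of `H`. -/
def IsUnscaledPseudoCodeword {R I : Type*} [Fintype R] [Fintype I]
    (H : Matrix R I (ZMod 2)) (p : I → ℕ) : Prop :=
  ∃ M : ℕ, 0 < M ∧ ∃ (σ : R → I → Equiv.Perm (Fin M)) (c : I × Fin M → ZMod 2),
    (matLift H σ).mulVec c = 0 ∧
    ∀ i, p i = (Finset.univ.filter (fun k : Fin M => c (i, k) = 1)).card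

/-- The Tanner graph of `H`: bit nodes = columns, check nodes = rows. -/
def TannerGraph {R I : Type*} (H : Matrix R I (ZMod 2)) : SimpleGraph (I ⊕ R) where
  Adj v w := match v, w with
    | Sum.inl i, Sum.inr j => H j i = 1
    | Sum.inr j, Sum.inl i => H j i = 1
    | _, _ => False
  symm := by constructor; rintro (i | j) (i' | j') h <;> simp_all
  loopless := by constructor; rintro (i | j) h <;> simp_all

/-- `π : W → V` realizes `G'` as an `M`-cover of `G`. -/
def IsMCover {V W : Type*} (G : SimpleGraph V) (G' : SimpleGraph W) (π : W → V) (M : ℕ) : Prop :=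
  Function.Surjective π ∧
  (∀ a b, G'.Adj a b → G.Adj (π a) (π b)) ∧
  (∀ v : V, Nat.card (π ⁻¹' {v}) = M) ∧
  (∀ w : W, Set.BijOn π (G'.neighborSet w) (G.neighborSet (π w)))

/-!
For a check `j`, the weights `w i = h_{ji} p_i` have even total `2m` (as `p` is a codeword mod 2)
and each is at most `m` (the fundamental cone inequality). Concatenating blocks of lengths `w i`
fills `[0, 2m)`; reducing positions mod `m` maps each block injectively into `Fin m`, and every
residue is hit exactly twice. Taking the codeword `c (i, k) = [k < p i]` of the lift and
permutations `σ j i` that carry the image of block `i` onto `{k | k < p i}`, every check of the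
lift sees an even number of ones.
-/

theorem ZMod.val_two_eq_ite (a : ZMod 2) : a.val = if a = 1 then 1 else 0 := by
  fin_cases a <;> rfl

theorem Fin.exists_double_cover_of_sum_eq_two_mul {n m : ℕ} (w : Fin n → ℕ)
    (hsum : ∑ i, w i = 2 * m) (hle : ∀ i, w i ≤ m) :
    ∃ T : Fin n → Finset (Fin m), (∀ i, #(T i) = w i) ∧ ∀ l, #{i | l ∈ T i} = 2 := by
  -- `e ⟨i, t⟩` is the position of `t` in block `i` of `[0, 2m)`, split as (quotient, residue) mod `m`
  let e : (Σ i, Fin (w i)) ≃ Fin 2 × Fin m :=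
    finSigmaFinEquiv.trans ((finCongr hsum).trans finProdFinEquiv.symm)
  have hinj : ∀ i, Function.Injective fun t : Fin (w i) => (e ⟨i, t⟩).2 := by
    intro i t t' h
    have h' := congrArg Fin.val h
    simp only [e, Equiv.trans_apply, finProdFinEquiv_symm_apply, Fin.coe_modNat, finCongr_apply,
      Fin.val_cast, finSigmaFinEquiv_apply] at h'
    exact Fin.ext (Nat.ModEq.eq_of_lt_of_lt (Nat.ModEq.add_left_cancel' _ h')
      (t.2.trans_le (hle i)) (t'.2.trans_le (hle i)))
  refine ⟨fun i => univ.image fun t => (e ⟨i, t⟩).2,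
    fun i => by rw [card_image_of_injective _ (hinj i), card_univ, Fintype.card_fin], fun l => ?_⟩
  calc #{i | l ∈ univ.image fun t => (e ⟨i, t⟩).2}
      = #{x : Σ i, Fin (w i) | (e x).2 = l} := by
        symm
        refine card_nbij (fun x => x.1) ?_ ?_ ?_
        · rintro ⟨i, t⟩ h
          simp only [coe_filter, Set.mem_ofPred_eq, mem_univ, true_and] at h ⊢
          exact mem_image.2 ⟨t, mem_univ t, h⟩
        · rintro ⟨i, t⟩ h ⟨i', t'⟩ h' rfl
          simp only [coe_filter, Set.mem_ofPred_eq, mem_univ, true_and] at h h'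
          rw [hinj i (h.trans h'.symm)]
        · intro i h
          simp only [coe_filter, Set.mem_ofPred_eq, mem_univ, true_and, mem_image] at h
          obtain ⟨t, ht⟩ := h
          exact ⟨⟨i, t⟩, by simp [ht], rfl⟩
    _ = #{y : Fin 2 × Fin m | y.2 = l} := card_equiv e (by simp)
    _ = 2 := by
        rw [← univ_product_univ, filter_product_right fun b => b = l, card_product]
        simp [filter_eq']

theorem Finset.even_card_filter_mem_map {ι α β : Type*} [Fintype ι] [DecidableEq α] [DecidableEq β]
    (f : α ↪ β) (T : ι → Finset α) (hT : ∀ a, Even #{i | a ∈ T i}) (b : β) :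
    Even #{i | b ∈ (T i).map f} := by
  by_cases hb : b ∈ Set.range f
  · obtain ⟨a, rfl⟩ := hb
    simpa using hT a
  · simp_all [mem_map]

theorem matLift_mulVec_apply {R I : Type*} [Fintype I] (H : Matrix R I (ZMod 2)) {M : ℕ}
    (σ : R → I → Equiv.Perm (Fin M)) (c : I × Fin M → ZMod 2) (j : R) (l : Fin M) :
    (matLift H σ).mulVec c (j, l) = ∑ i, if H j i = 1 then c (i, σ j i l) else 0 := by
  simp [Matrix.mulVec, dotProduct, matLift, Fintype.sum_prod_type, ite_and]

theorem isUnscaledPseudoCodeword_of_even_cover {R I : Type*} [Fintype R] [Fintype I] {M : ℕ}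
    (hM : 0 < M) (H : Matrix R I (ZMod 2)) (p : I → ℕ) (hpM : ∀ i, p i ≤ M)
    (T : R → I → Finset (Fin M)) (hcard : ∀ j i, #(T j i) = (H j i).val * p i)
    (heven : ∀ j l, Even #{i | l ∈ T j i}) :
    IsUnscaledPseudoCodeword H p := by
  have hσ : ∀ j i, ∃ σ : Equiv.Perm (Fin M), H j i = 1 → ∀ l, (σ l : ℕ) < p i ↔ l ∈ T j i := by
    intro j i
    by_cases hji : H j i = 1
    · have hcard' : #(T j i) = #{k : Fin M | (k : ℕ) < p i} := by
        rw [hcard, hji, Fin.card_filter_val_lt, ZMod.val_one, one_mul, min_eq_right (hpM i)]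
      obtain ⟨σ, hσ⟩ := Equiv.Perm.exists_map_finset_eq _ _ hcard'
      refine ⟨σ, fun _ l => ?_⟩
      rw [← mem_map' σ.toEmbedding, hσ]
      simp
    · exact ⟨1, fun h => absurd h hji⟩
  choose σ hσ using hσ
  refine ⟨M, hM, σ, fun ik => if (ik.2 : ℕ) < p ik.1 then 1 else 0, ?_, fun i => ?_⟩
  · ext ⟨j, l⟩
    rw [matLift_mulVec_apply, Pi.zero_apply]
    refine Eq.trans ?_ (ZMod.natCast_eq_zero_iff_even.2 (heven j l))
    rw [card_filter, Nat.cast_sum]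
    refine sum_congr rfl fun i _ => ?_
    by_cases hji : H j i = 1
    · simp [hji, hσ j i hji l]
    · have hT : T j i = ∅ := by
        rw [← card_eq_zero, hcard, ZMod.val_two_eq_ite, if_neg hji, zero_mul]
      simp [hji, hT]
  · simp [Fin.card_filter_val_lt, hpM i]

theorem even_sum_val_mul_of_mulVec_eq_zero {R I : Type*} [Fintype I] {H : Matrix R I (ZMod 2)}
    {p : I → ℕ} (hcode : H.mulVec (fun i => (p i : ZMod 2)) = 0) (j : R) :
    Even (∑ i, (H j i).val * p i) := by
  rw [← ZMod.natCast_eq_zero_iff_even]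
  simpa [Matrix.mulVec, dotProduct] using congrFun hcode j

theorem two_mul_val_mul_le_sum_of_inFundCone {R I : Type*} [Fintype I] [DecidableEq I]
    {H : Matrix R I (ZMod 2)} {p : I → ℕ} (hcone : InFundCone H (fun i => (p i : ℝ))) (j : R) (i : I) :
    2 * ((H j i).val * p i) ≤ ∑ i', (H j i').val * p i' := by
  have hle : (H j i).val * p i ≤ ∑ i' ∈ univ.erase i, (H j i').val * p i' := by
    have h := hcone.2 j i
    dsimp only at h
    exact_mod_cast h
  rw [← add_sum_erase _ _ (mem_univ i)]
  omega

/-- a vector of nonnegative integers lying in the fundamental cone whose mod-2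
reduction is a codeword is an unscaled pseudo-codeword. -/
theorem stmt4 {r n : ℕ} (H : Matrix (Fin r) (Fin n) (ZMod 2)) (p : Fin n → ℕ)
    (hcone : InFundCone H (fun i => (p i : ℝ)))
    (hcode : H.mulVec (fun i => (p i : ZMod 2)) = 0) :
    IsUnscaledPseudoCodeword H p := by
  choose m hm using fun j => (even_sum_val_mul_of_mulVec_eq_zero hcode j).two_dvd
  have hw : ∀ j i, (H j i).val * p i ≤ m j := fun j i => by
    have := two_mul_val_mul_le_sum_of_inFundCone hcone j i
    have := hm j
    omega
  choose T hTcard hTcover using fun j => Fin.exists_double_cover_of_sum_eq_two_mul _ (hm j) (hw j)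
  have hmM : ∀ j, m j ≤ ∑ i, p i := fun j => by
    have : ∑ i, (H j i).val * p i ≤ ∑ i, p i :=
      sum_le_sum fun i _ => mul_le_of_le_one_left (Nat.zero_le _) (Nat.le_of_lt_succ (H j i).val_lt)
    have := hm j
    omega
  refine isUnscaledPseudoCodeword_of_even_cover (M := ∑ i, p i + 1) (Nat.succ_pos _) H p
    (fun i => Nat.le_succ_of_le (single_le_sum (fun _ _ => Nat.zero_le _) (mem_univ i)))
    (fun j i => (T j i).map (Fin.castLEEmb (Nat.le_succ_of_le (hmM j)))) (by simp [hTcard])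
    fun j => even_card_filter_mem_map _ _ fun l => by simp [hTcover j l]
end

section
/- Suppose every column of H has even weight (so every bit node of the Tanner graph T(H) has even degree). Then a vector c ∈ F₂ⁿ satisfies Hcᵀ = 0 over F₂ if and only if there exists a finite family of pairwise edge-disjoint closed trails (closed walks with no repeated edge) in T(H) whose union of edge sets is exactly the set of edges of T(H) incident to some bit node x_i with c_i = 1; in particular, in this union, at each bit node x of T(H) either all or none of the edges incident to x occur. -/
open Finset

/-!
Let `S` be the set of edges of `T(H)` at bit nodes `x_i` with `c_i = 1`. In `S` the check node
`f_j` has degree `#{i | h_ji = 1 ∧ c_i = 1}`, whose parity is `(H cᵀ)_j`, and the bit node `x_i`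
has degree `0` or `deg x_i`, which is even. So `H cᵀ = 0` iff all degrees in `S` are even, and by
Veblen's theorem this holds iff `S` is an edge-disjoint union of closed trails. For Veblen's
theorem, a longest trail in `S` must be closed (at an end of an open trail some edge of `S` is
unused, by parity), and removing it keeps all degrees even.
-/

namespace SimpleGraph

variable {V : Type*} {G : SimpleGraph V}

def IsClosedTrailDecomposition {ι : Type*} (S : Finset (Sym2 V)) (T : ι → Σ x, G.Walk x x) :
    Prop :=
  (∀ q, (T q).2.IsTrail ∧ ¬(T q).2.Nil) ∧
  Pairwise (fun q q' => ∀ e ∈ (T q).2.edges, e ∉ (T q').2.edges) ∧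
  ∀ e, (∃ q, e ∈ (T q).2.edges) ↔ e ∈ S

variable [DecidableEq V]

theorem Walk.IsTrail.even_card_filter_mem_iff {u v : V} {w : G.Walk u v} (hw : w.IsTrail)
    (x : V) : Even #{e ∈ w.edges.toFinset | x ∈ e} ↔ u ≠ v → x ≠ u ∧ x ≠ v := by
  rw [hw.edges_nodup.card_eq_countP]
  exact hw.even_countP_edges_iff x

theorem Walk.IsTrail.length_le_card {u v : V} {w : G.Walk u v} (hw : w.IsTrail)
    {S : Finset (Sym2 V)} (hwS : w.edges.toFinset ⊆ S) : w.length ≤ #S := by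
  rw [← w.length_edges, ← List.toFinset_card_of_nodup hw.edges_nodup]
  exact card_le_card hwS

theorem IsClosedTrailDecomposition.even_card_filter_mem {ι : Type*} [Fintype ι]
    {S : Finset (Sym2 V)} {T : ι → Σ x, G.Walk x x} (hT : IsClosedTrailDecomposition S T)
    (x : V) : Even #{e ∈ S | x ∈ e} := by
  obtain ⟨htrail, hdisj, hS⟩ := hT
  have hS_eq : S = univ.biUnion fun q => (T q).2.edges.toFinset := by
    ext e
    simp [← hS e]
  rw [hS_eq, filter_biUnion, card_biUnion]
  · exact even_sum _ fun q _ => ((htrail q).1.even_card_filter_mem_iff x).2 fun h => (h rfl).elim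
  · intro q _ q' _ hqq'
    exact Finset.disjoint_left.2 fun e he he' =>
      hdisj hqq' e (List.mem_toFinset.1 (mem_filter.1 he).1)
        (List.mem_toFinset.1 (mem_filter.1 he').1)

variable {S : Finset (Sym2 V)}

theorem Walk.IsTrail.exists_isTrail_cons_of_ne {x y : V} {w : G.Walk x y} (hw : w.IsTrail)
    (hxy : x ≠ y) (hwS : w.edges.toFinset ⊆ S) (hSG : ∀ e ∈ S, e ∈ G.edgeSet)
    (heven : Even #{e ∈ S | x ∈ e}) :
    ∃ (z : V) (h : G.Adj z x), (cons h w).IsTrail ∧ (cons h w).edges.toFinset ⊆ S := by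
  have hodd : ¬Even #{e ∈ w.edges.toFinset | x ∈ e} := by
    simpa [hw.even_card_filter_mem_iff x] using hxy
  obtain ⟨e, he, hew⟩ : ∃ e ∈ {e ∈ S | x ∈ e}, e ∉ {e ∈ w.edges.toFinset | x ∈ e} := by
    by_contra! h
    exact hodd (by rwa [(filter_subset_filter _ hwS).antisymm h])
  obtain ⟨heS, hxe⟩ := mem_filter.1 he
  obtain ⟨z, rfl⟩ := Sym2.mem_iff_exists.1 hxe
  have hxz : G.Adj x z := hSG _ heS
  refine ⟨z, hxz.symm, ?_, ?_⟩
  · simpa [Sym2.eq_swap, hw, hxe] using hew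
  · simpa [insert_subset_iff, Sym2.eq_swap, heS] using hwS

theorem exists_closed_isTrail_of_even_card_filter_mem (hSG : ∀ e ∈ S, e ∈ G.edgeSet)
    (hS : S.Nonempty) (heven : ∀ x, Even #{e ∈ S | x ∈ e}) :
    ∃ (x : V) (w : G.Walk x x), w.IsTrail ∧ ¬w.Nil ∧ w.edges.toFinset ⊆ S := by
  classical
  let P : ℕ → Prop := fun m =>
    ∃ (x y : V) (w : G.Walk x y), w.IsTrail ∧ w.edges.toFinset ⊆ S ∧ w.length = m
  have hP_le : ∀ m, P m → m ≤ #S := by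
    rintro _ ⟨x, y, w, hw, hwS, rfl⟩
    exact hw.length_le_card hwS
  have hP_one : P 1 := by
    obtain ⟨e, he⟩ := hS
    induction e using Sym2.ind with
    | _ a b =>
      have hab : G.Adj a b := hSG _ he
      exact ⟨a, b, hab.toWalk, by simp, by simpa using he, rfl⟩
  have hS_pos : 1 ≤ #S := hP_le 1 hP_one
  obtain ⟨x, y, w, hw, hwS, hlen⟩ := Nat.findGreatest_spec hS_pos hP_one
  have hlen_pos : 1 ≤ w.length := hlen ▸ Nat.le_findGreatest hS_pos hP_one
  obtain rfl : x = y := by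
    by_contra hxy
    obtain ⟨z, h, hzw, hzwS⟩ := hw.exists_isTrail_cons_of_ne hxy hwS hSG (heven x)
    have hP_succ : P (Nat.findGreatest P #S + 1) := ⟨z, y, _, hzw, hzwS, by simp [hlen]⟩
    have := Nat.le_findGreatest (hP_le _ hP_succ) hP_succ
    omega
  exact ⟨x, w, hw, by rw [← Walk.length_eq_zero_iff]; omega, hwS⟩

/-- Veblen's theorem. -/
theorem exists_isClosedTrailDecomposition_iff (hSG : ∀ e ∈ S, e ∈ G.edgeSet) :
    (∃ (p : ℕ) (T : Fin p → Σ x, G.Walk x x), IsClosedTrailDecomposition S T) ↔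
      ∀ x, Even #{e ∈ S | x ∈ e} := by
  refine ⟨fun ⟨p, T, hT⟩ => hT.even_card_filter_mem, fun heven => ?_⟩
  induction S using Finset.strongInduction with
  | _ S ih =>
  rcases S.eq_empty_or_nonempty with rfl | hS
  · exact ⟨0, Fin.elim0, by simp [IsClosedTrailDecomposition, Pairwise]⟩
  obtain ⟨x, w, hw, hw_nil, hwS⟩ := exists_closed_isTrail_of_even_card_filter_mem hSG hS heven
  have hrest : S \ w.edges.toFinset ⊂ S :=
    sdiff_ssubset hwS (by simpa [← Walk.eq_nil_iff_nil, Walk.edges_eq_nil] using hw_nil)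
  have heven_rest (v : V) : Even #{e ∈ S \ w.edges.toFinset | v ∈ e} := by
    have hsplit := sum_sdiff hwS (f := fun e => if v ∈ e then 1 else 0)
    simp only [← card_filter] at hsplit
    have := heven v
    rw [← hsplit, Nat.even_add] at this
    exact this.2 ((hw.even_card_filter_mem_iff v).2 fun h => (h rfl).elim)
  obtain ⟨p, T, htrail, hdisj, hT⟩ :=
    ih _ hrest (fun e he => hSG e (mem_sdiff.1 he).1) heven_rest
  refine ⟨p + 1, Fin.cons ⟨x, w⟩ T, ?_, ?_, ?_⟩
  · exact Fin.cases ⟨hw, hw_nil⟩ htrail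
  · have hw_disj : ∀ q, ∀ e ∈ (T q).2.edges, e ∉ w.edges := fun q e he hew =>
      (mem_sdiff.1 ((hT e).1 ⟨q, he⟩)).2 (List.mem_toFinset.2 hew)
    intro q q' hqq'
    induction q using Fin.cases <;> induction q' using Fin.cases
    · exact (hqq' rfl).elim
    · exact fun e he he' => hw_disj _ e he' he
    · exact hw_disj _
    · exact hdisj (fun h => hqq' (congrArg Fin.succ h))
  · intro e
    constructor
    · rintro ⟨q, hq⟩
      induction q using Fin.cases
      · exact hwS (List.mem_toFinset.2 hq)
      · exact (mem_sdiff.1 ((hT e).1 ⟨_, hq⟩)).1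
    · intro he
      by_cases hew : e ∈ w.edges
      · exact ⟨0, hew⟩
      · obtain ⟨q, hq⟩ := (hT e).2 (mem_sdiff.2 ⟨he, mt List.mem_toFinset.1 hew⟩)
        exact ⟨q.succ, hq⟩

end SimpleGraph

theorem Sym2.card_filter_mem {α : Type*} [Fintype α] [DecidableEq α] (S : Finset (Sym2 α))
    (x : α) :
    #{e ∈ S | x ∈ e} = #{y | s(x, y) ∈ S} := by
  have himage : {e ∈ S | x ∈ e} = image (fun y => s(x, y)) {y | s(x, y) ∈ S} := by
    ext e
    simp only [mem_filter, mem_image, mem_univ, true_and, Sym2.mem_iff_exists]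
    grind
  rw [himage, card_image_of_injective _ fun y y' h => Sym2.congr_right.1 h]

theorem Matrix.mulVec_eq_zero_iff_forall_even_card {R I : Type*} [Fintype I]
    (H : Matrix R I (ZMod 2)) (c : I → ZMod 2) :
    H.mulVec c = 0 ↔ ∀ j, Even #{i | H j i = 1 ∧ c i = 1} := by
  have hmul : ∀ a b : ZMod 2, a * b = if a = 1 ∧ b = 1 then 1 else 0 := by decide
  simp only [funext_iff, Pi.zero_apply, Matrix.mulVec, dotProduct, hmul, sum_boole,
    ZMod.natCast_eq_zero_iff_even]

namespace TannerGraph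

variable {R I : Type*} (H : Matrix R I (ZMod 2))

@[simp] theorem adj_inl_inr (i : I) (j : R) : (TannerGraph H).Adj (.inl i) (.inr j) ↔ H j i = 1 :=
  .rfl

@[simp] theorem adj_inr_inl (i : I) (j : R) : (TannerGraph H).Adj (.inr j) (.inl i) ↔ H j i = 1 :=
  .rfl

@[simp] theorem not_adj_inl_inl (i i' : I) : ¬(TannerGraph H).Adj (.inl i) (.inl i') := id

variable [Fintype R] [Fintype I] (c : I → ZMod 2)

noncomputable def supportEdges : Finset (Sym2 (I ⊕ R)) := by
  classical
  exact {e | e ∈ (TannerGraph H).edgeSet ∧ ∃ i, .inl i ∈ e ∧ c i = 1}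

@[simp] theorem mem_supportEdges {e : Sym2 (I ⊕ R)} :
    e ∈ supportEdges H c ↔ e ∈ (TannerGraph H).edgeSet ∧ ∃ i, .inl i ∈ e ∧ c i = 1 := by
  simp [supportEdges]

theorem supportEdges_subset_edgeSet : ∀ e ∈ supportEdges H c, e ∈ (TannerGraph H).edgeSet :=
  fun _ he => ((mem_supportEdges H c).1 he).1

variable [DecidableEq R] [DecidableEq I]

theorem card_filter_inl_mem_supportEdges (i : I) :
    #{e ∈ supportEdges H c | .inl i ∈ e} = #{j | H j i = 1 ∧ c i = 1} := by
  rw [Sym2.card_filter_mem, card_filter, Fintype.sum_sum_type]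
  simp

theorem card_filter_inr_mem_supportEdges (j : R) :
    #{e ∈ supportEdges H c | .inr j ∈ e} = #{i | H j i = 1 ∧ c i = 1} := by
  rw [Sym2.card_filter_mem, card_filter, Fintype.sum_sum_type]
  simp

theorem forall_even_card_filter_mem_supportEdges_iff (heven : ∀ i, Even #{j | H j i = 1}) :
    (∀ x, Even #{e ∈ supportEdges H c | x ∈ e}) ↔ H.mulVec c = 0 := by
  have hbit (i : I) : Even #{e ∈ supportEdges H c | .inl i ∈ e} := by
    by_cases hc : c i = 1 <;> simp [card_filter_inl_mem_supportEdges, hc, heven i]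
  simp [Sum.forall, hbit, card_filter_inr_mem_supportEdges,
    Matrix.mulVec_eq_zero_iff_forall_even_card]

end TannerGraph

/-- for a bit-even Tanner graph, `c` is a codeword iff there is a family of
pairwise edge-disjoint closed trails whose edges are exactly the edges of `T(H)` incident
to bit nodes `x_i` with `c_i = 1`. -/
theorem stmt11 {r n : ℕ} (H : Matrix (Fin r) (Fin n) (ZMod 2))
    (heven : ∀ i, Even (Finset.univ.filter (fun j : Fin r => H j i = 1)).card)
    (c : Fin n → ZMod 2) :
    H.mulVec c = 0 ↔
      ∃ (p : ℕ) (v : Fin p → Fin n ⊕ Fin r)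
        (W : ∀ q, (TannerGraph H).Walk (v q) (v q)),
        -- each `W q` is a closed trail (closed walk of positive length, no repeated edge)
        (∀ q, (W q).IsTrail ∧ ¬ (W q).Nil) ∧
        -- the trails are pairwise edge-disjoint
        (∀ q q', q ≠ q' → ∀ e, e ∈ (W q).edges → e ∉ (W q').edges) ∧
        -- the union of their edge sets consists exactly of the edges of `T(H)` incident
        -- to some bit node `x_i` with `c i = 1`
        (∀ e : Sym2 (Fin n ⊕ Fin r),
          (∃ q, e ∈ (W q).edges) ↔
            e ∈ (TannerGraph H).edgeSet ∧ ∃ i : Fin n, Sum.inl i ∈ e ∧ c i = 1) := by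
  rw [← TannerGraph.forall_even_card_filter_mem_supportEdges_iff H c heven,
    ← SimpleGraph.exists_isClosedTrailDecomposition_iff
      (TannerGraph.supportEdges_subset_edgeSet H c)]
  constructor
  · rintro ⟨p, T, htrail, hdisj, hT⟩
    exact ⟨p, fun q => (T q).1, fun q => (T q).2, htrail, fun q q' h => hdisj h,
      fun e => (hT e).trans (TannerGraph.mem_supportEdges H c)⟩
  · rintro ⟨p, v, W, htrail, hdisj, hW⟩
    exact ⟨p, fun q => ⟨v q, W q⟩, htrail, fun q q' h => hdisj q q' h,
      fun e => (hW e).trans (TannerGraph.mem_supportEdges H c).symm⟩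
end
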